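/- arXiv:2605.11320 — 2 statements merged into one kernel-verified Lean document; each statement's English description precedes it below -/
import Mathlib

section
/- For t ≥ 2, there is a graph isomorphism φ from GA(t,k)' \ (N[0] ∪ N[1]) onto GA(t-1,k)' \ N[0], given explicitly by: writing x = tq + r with 0 ≤ r < t, set φ(x) = (t-1)q + r if r ∈ {0,1}, and φ(x) = (t-1)q + (r-1) otherwise. In particular φ(2) = 1 and φ(t(k-1)+1) = (t-1)(k-1)+1. -/
/-- `GA(t,k)'`: the Generalized Andrásfai graph `GA(t,k)` on `ℤ/(t(k-1)+2)ℤ` with the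
edges of the exterior Hamiltonian cycle removed: vertices `i < j` are adjacent iff
`j - i ≡ 1 (mod t)` and `j - i ∉ {1, n-1}` where `n = t(k-1)+2`. -/
def GA' (t k : ℕ) : SimpleGraph (ZMod (t * (k - 1) + 2)) :=
  SimpleGraph.fromRel fun x y =>
    (y - x).val % t = 1 % t ∧ (y - x).val ≠ 1 ∧ (y - x).val ≠ t * (k - 1) + 1

def gg (r : ℕ) : ℕ := if r ≤ 1 then r else r - 1

def Fn (t a : ℕ) : ℕ := (t - 1) * (a / t) + gg (a % t)

def T1p (t K a : ℕ) : Prop := (a % t ≠ 1 ∧ a % t ≠ 2 % t ∧ a ≠ 0) ∨ a = 2 ∨ a = t * K + 1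

def T2p (t K b : ℕ) : Prop :=
  (b % (t - 1) ≠ 1 % (t - 1) ∧ b ≠ 0) ∨ b = 1 ∨ b = (t - 1) * K + 1

lemma Fn_eq (t q r : ℕ) (ht : 0 < t) (hr : r < t) : Fn t (t * q + r) = (t - 1) * q + gg r := by
  unfold Fn
  rw [Nat.mul_add_div ht, Nat.div_eq_of_lt hr, Nat.mul_add_mod, Nat.mod_eq_of_lt hr, add_zero]

lemma Fn_decomp (t a : ℕ) (ht : 0 < t) : Fn t a = (t - 1) * (a / t) + gg (a % t) := rfl

lemma Fn_succ (t a : ℕ) (ht : 2 ≤ t) :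
    Fn t (a + 1) = Fn t a + (if a % t = 1 then 0 else 1) := by
  obtain ⟨q, r, hr, rfl⟩ : ∃ q r, r < t ∧ a = t * q + r :=
    ⟨a / t, a % t, Nat.mod_lt _ (by omega), (Nat.div_add_mod a t).symm⟩
  have hmod : (t * q + r) % t = r := by rw [Nat.mul_add_mod, Nat.mod_eq_of_lt hr]
  rw [hmod, Fn_eq t q r (by omega) hr]
  rcases Nat.lt_or_ge r (t - 1) with h | h
  · have : t * q + r + 1 = t * q + (r + 1) := by omega
    rw [this, Fn_eq t q (r + 1) (by omega) (by omega)]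
    unfold gg
    split_ifs <;> omega
  · -- r = t - 1
    have hrt : r = t - 1 := by omega
    have hd : t * (q + 1) = t * q + t := by ring
    have : t * q + r + 1 = t * (q + 1) + 0 := by omega
    rw [this, Fn_eq t (q + 1) 0 (by omega) (by omega)]
    have hm : (t - 1) * (q + 1) = (t - 1) * q + (t - 1) := by ring
    unfold gg
    rw [hm]
    split_ifs <;> omega

lemma Fn_add_t (t a : ℕ) (ht : 2 ≤ t) : Fn t (a + t) = Fn t a + (t - 1) := by
  obtain ⟨q, r, hr, rfl⟩ : ∃ q r, r < t ∧ a = t * q + r :=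
    ⟨a / t, a % t, Nat.mod_lt _ (by omega), (Nat.div_add_mod a t).symm⟩
  have hd : t * (q + 1) = t * q + t := by ring
  have h1 : t * q + r + t = t * (q + 1) + r := by omega
  rw [h1, Fn_eq t (q + 1) r (by omega) hr, Fn_eq t q r (by omega) hr]
  have hm : (t - 1) * (q + 1) = (t - 1) * q + (t - 1) := by ring
  omega

lemma Fn_add_mul (t a s : ℕ) (ht : 2 ≤ t) : Fn t (a + t * s) = Fn t a + (t - 1) * s := by
  induction s with
  | zero => simp
  | succ s ih =>
    have h1 : t * (s + 1) = t * s + t := by ring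
    have h2 : (t - 1) * (s + 1) = (t - 1) * s + (t - 1) := by ring
    rw [h1, ← add_assoc, Fn_add_t _ _ ht, ih, h2, add_assoc]

lemma Fn_fwd (t a s : ℕ) (ht : 2 ≤ t) (ha : a % t ≠ 1) :
    Fn t (a + (t * s + 1)) = Fn t a + ((t - 1) * s + 1) := by
  have h1 : a + (t * s + 1) = (a + t * s) + 1 := by omega
  have h2 : (a + t * s) % t = a % t := Nat.add_mul_mod_self_left a t s
  rw [h1, Fn_succ _ _ ht, h2, if_neg ha, Fn_add_mul _ _ _ ht]
  omega

lemma Fn_mono (t : ℕ) (ht : 2 ≤ t) : Monotone (Fn t) := by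
  apply monotone_nat_of_le_succ
  intro a
  rw [Fn_succ _ _ ht]
  split_ifs <;> omega

lemma two_mod_ne_one (t : ℕ) (ht : 2 ≤ t) : 2 % t ≠ 1 := by
  rcases Nat.lt_or_ge t 3 with h | h
  · have : t = 2 := by omega
    subst this; decide
  · rw [Nat.mod_eq_of_lt (by omega)]; omega

lemma tK_mod (t K : ℕ) (ht : 2 ≤ t) : (t * K + 1) % t = 1 := by
  rw [Nat.mul_add_mod, Nat.mod_eq_of_lt (by omega)]

lemma T1p_mod_ne_one (t K a b : ℕ) (ht : 2 ≤ t) (ha : T1p t K a) (hab : a < b)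
    (hb' : b < t * K + 2) : a % t ≠ 1 := by
  rcases ha with ⟨h1, _, _⟩ | rfl | rfl
  · exact h1
  · rcases Nat.lt_or_ge t 3 with h | h
    · have : t = 2 := by omega
      subst this; decide
    · rw [Nat.mod_eq_of_lt (by omega)]; omega
  · omega

lemma Fn_strict (t K a b : ℕ) (ht : 2 ≤ t) (ha : T1p t K a) (hab : a < b)
    (hb' : b < t * K + 2) : Fn t a < Fn t b := by
  have h1 : Fn t (a + 1) = Fn t a + 1 := by
    rw [Fn_succ _ _ ht, if_neg (T1p_mod_ne_one t K a b ht ha hab hb')]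
  have := Fn_mono t ht (show a + 1 ≤ b by omega)
  omega

lemma Fn_lt (t K a : ℕ) (ht : 2 ≤ t) (ha : a < t * K + 2) : Fn t a < (t - 1) * K + 2 := by
  have h1 : Fn t (t * K + 1) = (t - 1) * K + 1 := by
    rw [Fn_eq t K 1 (by omega) (by omega)]; rfl
  have := Fn_mono t ht (show a ≤ t * K + 1 by omega)
  omega

def Gn (t K b : ℕ) : ℕ :=
  if b = (t - 1) * K + 1 then t * K + 1
  else t * (b / (t - 1)) + (if b % (t - 1) = 0 then 0 else b % (t - 1) + 1)

lemma Fn_two (t : ℕ) (ht : 2 ≤ t) : Fn t 2 = 1 := by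
  rcases Nat.lt_or_ge t 3 with h | h
  · have : t = 2 := by omega
    subst this; decide
  · have h2 : (2 : ℕ) = t * 0 + 2 := by omega
    rw [h2, Fn_eq t 0 2 (by omega) (by omega)]
    simp [gg]

lemma Fn_last (t K : ℕ) (ht : 2 ≤ t) : Fn t (t * K + 1) = (t - 1) * K + 1 := by
  rw [Fn_eq t K 1 (by omega) (by omega)]; rfl

lemma Gn_one (t K : ℕ) (ht : 2 ≤ t) (hK : 2 ≤ K) : Gn t K 1 = 2 := by
  have h4 : 2 ≤ (t - 1) * K := by
    calc 2 = 1 * 2 := by omega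
    _ ≤ (t - 1) * K := Nat.mul_le_mul (by omega) hK
  unfold Gn
  set M := (t - 1) * K with hM
  rw [if_neg (by omega)]
  rcases Nat.lt_or_ge t 3 with h | h
  · have : t = 2 := by omega
    subst this; decide
  · rw [Nat.div_eq_of_lt (by omega), Nat.mod_eq_of_lt (by omega), if_neg (by omega)]
    omega

lemma FT (t K a : ℕ) (ht : 2 ≤ t) (hK : 2 ≤ K) (ha : T1p t K a) (ha' : a < t * K + 2) :
    T2p t K (Fn t a) := by
  rcases ha with ⟨h1, h2, h3⟩ | rfl | rfl
  · -- generic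
    rcases Nat.lt_or_ge t 3 with h | h
    · exfalso
      have : t = 2 := by omega
      subst this
      omega
    · have h2t : (2 : ℕ) % t = 2 := Nat.mod_eq_of_lt (by omega)
      rw [h2t] at h2
      obtain ⟨q, r, hr, rfl⟩ : ∃ q r, r < t ∧ a = t * q + r :=
        ⟨a / t, a % t, Nat.mod_lt _ (by omega), (Nat.div_add_mod a t).symm⟩
      have hmod : (t * q + r) % t = r := by rw [Nat.mul_add_mod, Nat.mod_eq_of_lt hr]
      rw [hmod] at h1 h2
      rw [Fn_eq t q r (by omega) hr]
      left
      have hgg : gg r ≤ t - 2 ∧ gg r ≠ 1 := by unfold gg; split_ifs <;> omega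
      constructor
      · rw [Nat.mul_add_mod, Nat.mod_eq_of_lt (show gg r < t - 1 by omega),
          Nat.mod_eq_of_lt (show 1 < t - 1 by omega)]
        exact hgg.2
      · rcases Nat.eq_zero_or_pos q with rfl | hq
        · have : gg r ≠ 0 := by unfold gg; split_ifs <;> omega
          omega
        · have : (t - 1) * 1 ≤ (t - 1) * q := Nat.mul_le_mul_left _ hq
          omega
  · rw [Fn_two t ht]; right; left; rfl
  · rw [Fn_last t K ht]; right; right; rfl

lemma GF (t K a : ℕ) (ht : 2 ≤ t) (hK : 2 ≤ K) (ha : T1p t K a) (ha' : a < t * K + 2) :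
    Gn t K (Fn t a) = a := by
  rcases ha with ⟨h1, h2, h3⟩ | rfl | rfl
  · rcases Nat.lt_or_ge t 3 with h | h
    · exfalso
      have : t = 2 := by omega
      subst this
      omega
    · have h2t : (2 : ℕ) % t = 2 := Nat.mod_eq_of_lt (by omega)
      rw [h2t] at h2
      obtain ⟨q, r, hr, rfl⟩ : ∃ q r, r < t ∧ a = t * q + r :=
        ⟨a / t, a % t, Nat.mod_lt _ (by omega), (Nat.div_add_mod a t).symm⟩
      have hmod : (t * q + r) % t = r := by rw [Nat.mul_add_mod, Nat.mod_eq_of_lt hr]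
      rw [hmod] at h1 h2
      rw [Fn_eq t q r (by omega) hr]
      have hgg : gg r ≤ t - 2 ∧ gg r ≠ 1 := by unfold gg; split_ifs <;> omega
      have hdiv : ((t - 1) * q + gg r) / (t - 1) = q := by
        rw [Nat.mul_add_div (by omega), Nat.div_eq_of_lt (by omega), add_zero]
      have hmod2 : ((t - 1) * q + gg r) % (t - 1) = gg r := by
        rw [Nat.mul_add_mod, Nat.mod_eq_of_lt (by omega)]
      unfold Gn
      rw [if_neg, hdiv, hmod2]
      · rcases Nat.eq_zero_or_pos r with rfl | hr0
        · simp [gg]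
        · have hr3 : 3 ≤ r := by omega
          have : gg r = r - 1 := by unfold gg; split_ifs <;> omega
          rw [this, if_neg (show ¬(r - 1 = 0) by omega)]
          congr 1
          omega
      · intro hcon
        have : ((t - 1) * q + gg r) % (t - 1) = ((t - 1) * K + 1) % (t - 1) := by rw [hcon]
        rw [hmod2, Nat.mul_add_mod, Nat.mod_eq_of_lt (by omega)] at this
        exact hgg.2 this
  · rw [Fn_two t ht, Gn_one t K ht hK]
  · rw [Fn_last t K ht]
    unfold Gn
    rw [if_pos rfl]

lemma one_mod_sub (t : ℕ) (ht : 3 ≤ t) : 1 % (t - 1) = 1 := Nat.mod_eq_of_lt (by omega)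

lemma GT (t K b : ℕ) (ht : 2 ≤ t) (hK : 2 ≤ K) (hb : T2p t K b) (hb' : b < (t - 1) * K + 2) :
    T1p t K (Gn t K b) ∧ Gn t K b < t * K + 2 ∧ Fn t (Gn t K b) = b := by
  have h4 : 2 ≤ (t - 1) * K := by
    calc 2 = 1 * 2 := by omega
    _ ≤ (t - 1) * K := Nat.mul_le_mul (by omega) hK
  have htK : 4 ≤ t * K := by
    calc 4 = 2 * 2 := by omega
    _ ≤ t * K := Nat.mul_le_mul ht hK
  rcases hb with ⟨h1, h2⟩ | rfl | rfl
  · -- generic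
    rcases Nat.lt_or_ge t 3 with h | h
    · exfalso
      have : t = 2 := by omega
      subst this
      omega
    · have h1t : 1 % (t - 1) = 1 := one_mod_sub t h
      rw [h1t] at h1
      obtain ⟨q, r, hr, rfl⟩ : ∃ q r, r < t - 1 ∧ b = (t - 1) * q + r :=
        ⟨b / (t - 1), b % (t - 1), Nat.mod_lt _ (by omega), (Nat.div_add_mod b (t - 1)).symm⟩
      have hmod : ((t - 1) * q + r) % (t - 1) = r := by
        rw [Nat.mul_add_mod, Nat.mod_eq_of_lt hr]
      have hdiv : ((t - 1) * q + r) / (t - 1) = q := by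
        rw [Nat.mul_add_div (by omega), Nat.div_eq_of_lt hr, add_zero]
      rw [hmod] at h1
      have hne : (t - 1) * q + r ≠ (t - 1) * K + 1 := by
        intro hcon
        have : ((t - 1) * q + r) % (t - 1) = ((t - 1) * K + 1) % (t - 1) := by rw [hcon]
        rw [hmod, Nat.mul_add_mod, h1t] at this
        exact h1 this
      have hqK : q ≤ K := by
        have h5 : (t - 1) * q ≤ (t - 1) * q + r := by omega
        have h6 : (t - 1) * q ≤ (t - 1) * K + 1 := by omega
        by_contra hcon
        have : (t - 1) * (K + 1) ≤ (t - 1) * q := Nat.mul_le_mul_left _ (by omega)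
        have h7 : (t - 1) * (K + 1) = (t - 1) * K + (t - 1) := by ring
        omega
      unfold Gn
      rw [if_neg hne, hdiv, hmod]
      rcases Nat.eq_zero_or_pos r with rfl | hr0
      · rw [if_pos rfl]
        simp only [add_zero] at *
        have hq1 : 1 ≤ q := by
          rcases Nat.eq_zero_or_pos q with rfl | h5
          · simp at h2
          · exact h5
        have htq : t * q ≤ t * K := Nat.mul_le_mul_left _ hqK
        refine ⟨?_, by omega, ?_⟩
        · left
          have hmt : (t * q) % t = 0 := by simp [Nat.mul_mod_right]

          refine ⟨by omega, ?_, ?_⟩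
          · rw [hmt, Nat.mod_eq_of_lt (show 2 < t by omega)]
            omega
          · have : t * 1 ≤ t * q := Nat.mul_le_mul_left _ hq1
            omega
        · have : t * q = t * q + 0 := by omega
          rw [this, Fn_eq t q 0 (by omega) (by omega)]
          simp [gg]
      · have hr2 : 2 ≤ r := by omega
        rw [if_neg (by omega)]
        have hqK1 : q ≤ K - 1 := by
          rcases Nat.eq_or_lt_of_le hqK with rfl | h5
          · exfalso
            have : (t - 1) * q + r < (t - 1) * q + 2 := by omega
            omega
          · omega
        have htq : t * q ≤ t * (K - 1) := Nat.mul_le_mul_left _ hqK1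
        have htK1 : t * (K - 1) + t = t * K := by
          rw [← Nat.mul_succ]; congr 1; omega
        have hmt : (t * q + (r + 1)) % t = r + 1 := by
          rw [Nat.mul_add_mod, Nat.mod_eq_of_lt (by omega)]
        refine ⟨?_, by omega, ?_⟩
        · left
          refine ⟨by omega, ?_, by omega⟩
          rw [hmt, Nat.mod_eq_of_lt (show 2 < t by omega)]
          omega
        · rw [Fn_eq t q (r + 1) (by omega) (by omega)]
          have : gg (r + 1) = r := by unfold gg; split_ifs <;> omega
          rw [this]
  · -- b = 1
    rw [Gn_one t K ht hK]
    exact ⟨Or.inr (Or.inl rfl), by omega, Fn_two t ht⟩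
  · -- b = (t-1)K+1
    unfold Gn
    rw [if_pos rfl]
    exact ⟨Or.inr (Or.inr rfl), by omega, Fn_last t K ht⟩

lemma back (t K a b : ℕ) (ht : 3 ≤ t) (hK : 2 ≤ K) (ha : T1p t K a) (hb : T1p t K b)
    (ha' : a < t * K + 2) (hb' : b < t * K + 2) (hab : a < b)
    (hD : (Fn t b - Fn t a) % (t - 1) = 1 % (t - 1)) : (b - a) % t = 1 := by
  have h1t : 1 % (t - 1) = 1 := one_mod_sub t ht
  have h2t : (2 : ℕ) % t = 2 := Nat.mod_eq_of_lt (by omega)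
  rw [h1t] at hD
  have hlta := Nat.mod_lt a (show 0 < t by omega)
  have hltb := Nat.mod_lt b (show 0 < t by omega)
  have hA : (a % t = 0 ∧ gg (a % t) = 0) ∨ (a = 2 ∧ a % t = 2 ∧ gg (a % t) = 1) ∨
      (3 ≤ a % t ∧ a % t ≤ t - 1 ∧ gg (a % t) = a % t - 1) := by
    rcases ha with ⟨h1, h2, h3⟩ | h | h
    · rw [h2t] at h2
      rcases Nat.eq_zero_or_pos (a % t) with hz | hp
      · exact Or.inl ⟨hz, by rw [hz]; rfl⟩
      · exact Or.inr (Or.inr ⟨by omega, by omega, by unfold gg; split_ifs <;> omega⟩)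
    · refine Or.inr (Or.inl ⟨h, ?_, ?_⟩) <;> rw [h, h2t]
      rfl
    · exfalso; omega
  have hB : (b % t = 0 ∧ gg (b % t) = 0) ∨ (b = t * K + 1 ∧ b % t = 1 ∧ gg (b % t) = 1) ∨
      (3 ≤ b % t ∧ b % t ≤ t - 1 ∧ gg (b % t) = b % t - 1) := by
    have ha2 : 2 ≤ a := by
      rcases ha with ⟨h1, h2, h3⟩ | h | h
      · have : a ≠ 1 := fun hh => h1 (by rw [hh, Nat.mod_eq_of_lt (by omega)])
        omega
      · omega
      · omega
    rcases hb with ⟨h1, h2, h3⟩ | h | h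
    · rw [h2t] at h2
      rcases Nat.eq_zero_or_pos (b % t) with hz | hp
      · exact Or.inl ⟨hz, by rw [hz]; rfl⟩
      · exact Or.inr (Or.inr ⟨by omega, by omega, by unfold gg; split_ifs <;> omega⟩)
    · exfalso; omega
    · refine Or.inr (Or.inl ⟨h, ?_, ?_⟩) <;> rw [h, tK_mod t K (by omega)]
      rfl
  have hFa : Fn t a = (t - 1) * (a / t) + gg (a % t) := rfl
  have hFb : Fn t b = (t - 1) * (b / t) + gg (b % t) := rfl
  have hstrict : Fn t a < Fn t b := Fn_strict t K a b (by omega) ha hab hb'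
  have hga2 : gg (a % t) ≤ t - 2 := by omega
  have hgb2 : gg (b % t) ≤ t - 2 := by omega
  have hq : a / t ≤ b / t := by
    by_contra hcon
    have hm1 : (t - 1) * (b / t + 1) ≤ (t - 1) * (a / t) := Nat.mul_le_mul_left _ (by omega)
    have hm2 : (t - 1) * (b / t + 1) = (t - 1) * (b / t) + (t - 1) := by ring
    omega
  obtain ⟨d, hd⟩ : ∃ d, b / t = a / t + d := ⟨b / t - a / t, by omega⟩
  have hmul1 : (t - 1) * (a / t + d) = (t - 1) * (a / t) + (t - 1) * d := by ring
  have hmul2 : t * (a / t + d) = t * (a / t) + t * d := by ring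
  have hdab : t * (a / t) + a % t = a := Nat.div_add_mod a t
  have hdb : t * (b / t) + b % t = b := Nat.div_add_mod b t
  rw [hd, hmul2] at hdb
  rw [hd, hmul1] at hFb
  have hXeq : (Fn t b - Fn t a) + gg (a % t) = (t - 1) * d + gg (b % t) := by omega
  obtain ⟨e, he⟩ : ∃ e, Fn t b - Fn t a = (t - 1) * e + 1 :=
    ⟨(Fn t b - Fn t a) / (t - 1), by
      conv_lhs => rw [← Nat.div_add_mod (Fn t b - Fn t a) (t - 1)]
      rw [hD]⟩
  have hdich : (e = d ∧ gg (b % t) = gg (a % t) + 1) ∨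
      (gg (a % t) = t - 2 ∧ gg (b % t) = 0 ∧ 1 ≤ d) := by
    rcases Nat.lt_or_ge e d with h | h
    · right
      have hm3 : (t - 1) * (e + 1) ≤ (t - 1) * d := Nat.mul_le_mul_left _ (by omega)
      have hm4 : (t - 1) * (e + 1) = (t - 1) * e + (t - 1) := by ring
      omega
    · have hm3 : (t - 1) * d ≤ (t - 1) * e := Nat.mul_le_mul_left _ h
      rcases Nat.eq_or_lt_of_le h with heq | h'
      · left
        constructor
        · omega
        · rw [← heq] at he
          omega
      · exfalso
        have hm4 : (t - 1) * (d + 1) ≤ (t - 1) * e := Nat.mul_le_mul_left _ (by omega)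
        have hm5 : (t - 1) * (d + 1) = (t - 1) * d + (t - 1) := by ring
        omega
  have hkey : b % t = a % t + 1 ∨ (a % t = t - 1 ∧ b % t = 0 ∧ 1 ≤ d) := by omega
  rcases hkey with h | ⟨h1, h2, h3⟩
  · have hba : b - a = t * d + 1 := by omega
    rw [hba, Nat.mul_add_mod]
    exact Nat.mod_eq_of_lt (by omega)
  · have hm6 : t * (d - 1) + t = t * d := by rw [← Nat.mul_succ]; congr 1; omega
    have hba : b - a = t * (d - 1) + 1 := by omega
    rw [hba, Nat.mul_add_mod]
    exact Nat.mod_eq_of_lt (by omega)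

lemma core (t K a b : ℕ) (ht : 2 ≤ t) (hK : 2 ≤ K) (ha : T1p t K a) (hb : T1p t K b)
    (ha' : a < t * K + 2) (hb' : b < t * K + 2) (hab : a < b) :
    ((b - a) % t = 1 % t ∧ b - a ≠ 1 ∧ b - a ≠ t * K + 1) ↔
    ((Fn t b - Fn t a) % (t - 1) = 1 % (t - 1) ∧ Fn t b - Fn t a ≠ 1 ∧
      Fn t b - Fn t a ≠ (t - 1) * K + 1) := by
  have h1t : 1 % t = 1 := Nat.mod_eq_of_lt (by omega)
  have hsub : ∀ s, b - a = t * s + 1 → Fn t b - Fn t a = (t - 1) * s + 1 := by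
    intro s hs
    have hbeq : b = a + (t * s + 1) := by omega
    have hamod : a % t ≠ 1 := T1p_mod_ne_one t K a b ht ha hab hb'
    rw [hbeq, Fn_fwd t a s ht hamod]
    omega
  have main : (b - a) % t = 1 →
      ((Fn t b - Fn t a) % (t - 1) = 1 % (t - 1) ∧
        ((b - a = 1) ↔ (Fn t b - Fn t a = 1)) ∧
        ((b - a = t * K + 1) ↔ (Fn t b - Fn t a = (t - 1) * K + 1))) := by
    intro hm
    obtain ⟨s, hs⟩ : ∃ s, b - a = t * s + 1 :=
      ⟨(b - a) / t, by
        conv_lhs => rw [← Nat.div_add_mod (b - a) t]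
        rw [hm]⟩
    have hF := hsub s hs
    refine ⟨by rw [hF, Nat.mul_add_mod], ?_, ?_⟩
    · constructor
      · intro hc
        have hs0 : t * s = 0 := by omega
        have hs1 : s = 0 := by
          rcases Nat.mul_eq_zero.mp hs0 with h | h
          · omega
          · exact h
        rw [hs1, Nat.mul_zero] at hF
        omega
      · intro hc
        rw [hF] at hc
        have hs0 : (t - 1) * s = 0 := by omega
        have hs1 : s = 0 := by
          rcases Nat.mul_eq_zero.mp hs0 with h | h
          · omega
          · exact h
        rw [hs1, Nat.mul_zero] at hs
        omega
    · constructor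
      · intro hc
        have : s = K := Nat.eq_of_mul_eq_mul_left (show 0 < t by omega) (by omega)
        rw [this] at hF
        omega
      · intro hc
        rw [hF] at hc
        have : s = K := Nat.eq_of_mul_eq_mul_left (show 0 < t - 1 by omega) (by omega)
        rw [this] at hs
        omega
  constructor
  · rintro ⟨hm, h1, h2⟩
    rw [h1t] at hm
    obtain ⟨hx, hy, hz⟩ := main hm
    exact ⟨hx, fun hc => h1 (hy.mpr hc), fun hc => h2 (hz.mpr hc)⟩
  · rintro ⟨hm, h1, h2⟩
    have hd : (b - a) % t = 1 := by
      rcases Nat.lt_or_ge t 3 with h3 | h3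
      · have ht2 : t = 2 := by omega
        subst ht2
        have hA : a = 2 ∨ a = 2 * K + 1 := by
          rcases ha with ⟨u1, u2, u3⟩ | h | h
          · exfalso; omega
          · exact Or.inl h
          · exact Or.inr h
        have hB : b = 2 ∨ b = 2 * K + 1 := by
          rcases hb with ⟨u1, u2, u3⟩ | h | h
          · exfalso; omega
          · exact Or.inl h
          · exact Or.inr h
        omega
      · exact back t K a b h3 hK ha hb ha' hb' hab hm
    obtain ⟨hx, hy, hz⟩ := main hd
    exact ⟨by rw [h1t]; exact hd, fun hc => h1 (hy.mp hc), fun hc => h2 (hz.mp hc)⟩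

lemma rel_symm (t K : ℕ) (ht : 1 ≤ t) (hK : 2 ≤ K) (x y : ZMod (t * K + 2)) (hxy : x ≠ y)
    (h : (y - x).val % t = 1 % t ∧ (y - x).val ≠ 1 ∧ (y - x).val ≠ t * K + 1) :
    (x - y).val % t = 1 % t ∧ (x - y).val ≠ 1 ∧ (x - y).val ≠ t * K + 1 := by
  haveI : NeZero (t * K + 2) := ⟨by omega⟩
  obtain ⟨h1, h2, h3⟩ := h
  have hne : y - x ≠ 0 := sub_ne_zero.mpr (fun hh => hxy hh.symm)
  have hd0 : (y - x).val ≠ 0 := fun hh => hne ((ZMod.val_eq_zero _).mp hh)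
  have hdlt : (y - x).val < t * K + 2 := ZMod.val_lt _
  have hxyv : (x - y).val = t * K + 2 - (y - x).val := by
    rw [show x - y = -(y - x) by ring, ZMod.neg_val, if_neg hne]
  rw [hxyv]
  refine ⟨?_, by omega, by omega⟩
  rcases Nat.lt_or_ge t 2 with h4 | h4
  · have : t = 1 := by omega
    subst this
    simp [Nat.mod_one]
  · have h1t : 1 % t = 1 := Nat.mod_eq_of_lt (by omega)
    rw [h1t] at h1 ⊢
    obtain ⟨c, hc⟩ : ∃ c, (y - x).val = t * c + 1 :=
      ⟨(y - x).val / t, by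
        conv_lhs => rw [← Nat.div_add_mod (y - x).val t]
        rw [h1]⟩
    have hcK : c ≤ K := by
      by_contra hcon
      have : t * (K + 1) ≤ t * c := Nat.mul_le_mul_left _ (by omega)
      have h5 : t * (K + 1) = t * K + t := by ring
      omega
    obtain ⟨g, hg⟩ : ∃ g, K = c + g := ⟨K - c, by omega⟩
    have h6 : t * (c + g) = t * c + t * g := by ring
    have h7 : t * K + 2 - (y - x).val = t * g + 1 := by
      rw [hc, hg, h6]; omega
    rw [h7, Nat.mul_add_mod]
    exact Nat.mod_eq_of_lt (by omega)

lemma adj_GA (t k : ℕ) (ht : 1 ≤ t) (hk : 3 ≤ k) (x y : ZMod (t * (k - 1) + 2)) :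
    (GA' t k).Adj x y ↔ x ≠ y ∧
      ((y - x).val % t = 1 % t ∧ (y - x).val ≠ 1 ∧ (y - x).val ≠ t * (k - 1) + 1) := by
  have hK : 2 ≤ k - 1 := by omega
  rw [GA', SimpleGraph.fromRel_adj]
  constructor
  · rintro ⟨hxy, h | h⟩
    · exact ⟨hxy, h⟩
    · exact ⟨hxy, rel_symm t (k - 1) ht hK y x (fun hh => hxy hh.symm) h⟩
  · rintro ⟨hxy, h⟩
    exact ⟨hxy, Or.inl h⟩

lemma mod_shift (t a : ℕ) (ht : 2 ≤ t) (ha : 1 ≤ a) :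
    ((a - 1) % t = 1 % t) ↔ (a % t = 2 % t) := by
  constructor
  · intro h
    have h2 : a - 1 ≡ 1 [MOD t] := h
    have h3 := Nat.ModEq.add_right 1 h2
    rwa [Nat.sub_add_cancel ha] at h3
  · intro h
    have h2 : a ≡ 2 [MOD t] := h
    have h3 : (a - 1) + 1 ≡ 1 + 1 [MOD t] := by rw [Nat.sub_add_cancel ha]; exact h2
    exact Nat.ModEq.add_right_cancel' 1 h3

lemma mem1 (t k : ℕ) (ht : 2 ≤ t) (hk : 3 ≤ k) (x : ZMod (t * (k - 1) + 2)) :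
    x ∈ (({0, 1} : Set (ZMod (t * (k - 1) + 2))) ∪ (GA' t k).neighborSet 0 ∪
        (GA' t k).neighborSet 1)ᶜ ↔ T1p t (k - 1) x.val := by
  haveI : NeZero (t * (k - 1) + 2) := ⟨by omega⟩
  have hK : 2 ≤ k - 1 := by omega
  have htK : 4 ≤ t * (k - 1) := by
    calc 4 = 2 * 2 := by omega
    _ ≤ t * (k - 1) := Nat.mul_le_mul ht hK
  have hval : x.val < t * (k - 1) + 2 := ZMod.val_lt x
  have h0 : (0 : ZMod (t * (k - 1) + 2)).val = 0 := ZMod.val_zero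
  have h1 : (1 : ZMod (t * (k - 1) + 2)).val = 1 := by
    rw [ZMod.val_one_eq_one_mod]
    exact Nat.mod_eq_of_lt (by omega)
  have hx0 : x = 0 ↔ x.val = 0 := by
    constructor
    · intro h; rw [h, h0]
    · intro h; exact ZMod.val_injective _ (by rw [h, h0])
  have hx1 : x = 1 ↔ x.val = 1 := by
    constructor
    · intro h; rw [h, h1]
    · intro h; exact ZMod.val_injective _ (by rw [h, h1])
  have h1t : 1 % t = 1 := Nat.mod_eq_of_lt (by omega)
  have h2t : 2 % t ≠ 1 := two_mod_ne_one t ht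
  have hnm : (t * (k - 1) + 1) % t = 1 := tK_mod t (k - 1) ht
  have hmem : x ∈ (({0, 1} : Set (ZMod (t * (k - 1) + 2))) ∪ (GA' t k).neighborSet 0 ∪
      (GA' t k).neighborSet 1)ᶜ ↔
      ¬((x = 0 ∨ x = 1) ∨ (GA' t k).Adj 0 x ∨ (GA' t k).Adj 1 x) := by
    simp only [Set.mem_compl_iff, Set.mem_union, Set.mem_insert_iff, Set.mem_singleton_iff,
      SimpleGraph.mem_neighborSet, or_assoc]
  rw [hmem]
  have hAdj0 : (GA' t k).Adj 0 x ↔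
      (x.val ≠ 0 ∧ x.val % t = 1 ∧ x.val ≠ 1 ∧ x.val ≠ t * (k - 1) + 1) := by
    rw [adj_GA t k (by omega) hk, sub_zero, h1t]
    constructor
    · rintro ⟨u, v⟩
      exact ⟨fun w => u (hx0.mpr w).symm, v⟩
    · rintro ⟨u, v⟩
      exact ⟨fun w => u (hx0.mp w.symm), v⟩
  by_cases hv0 : x.val = 0
  · constructor
    · intro h; exact absurd (Or.inl (Or.inl (hx0.mpr hv0))) h
    · intro h
      exfalso
      rcases h with ⟨u, v, w⟩ | u | u <;> omega
  by_cases hv1 : x.val = 1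
  · constructor
    · intro h; exact absurd (Or.inl (Or.inr (hx1.mpr hv1))) h
    · intro h
      exfalso
      rcases h with ⟨u, v, w⟩ | u | u
      · exact u (by rw [hv1, h1t])
      · omega
      · omega
  have hv2 : 2 ≤ x.val := by omega
  have hs1 : (x - 1).val = x.val - 1 := by
    rw [ZMod.val_sub (by rw [h1]; omega), h1]
  have hAdj1 : (GA' t k).Adj 1 x ↔
      (x.val % t = 2 % t ∧ x.val ≠ 2 ∧ x.val ≠ t * (k - 1) + 2) := by
    rw [adj_GA t k (by omega) hk, hs1]
    constructor
    · rintro ⟨u, v, w, z⟩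
      rw [mod_shift t x.val ht (by omega)] at v
      exact ⟨v, by omega, by omega⟩
    · rintro ⟨u, v, w⟩
      refine ⟨fun hh => hv1 (hx1.mp hh.symm), ?_, by omega, by omega⟩
      rw [mod_shift t x.val ht (by omega)]
      exact u
  rw [hAdj0, hAdj1, T1p]
  have hE2 : x.val = 2 → x.val % t = 2 % t := fun h => by rw [h]
  have hEn : x.val = t * (k - 1) + 1 → x.val % t = 1 := fun h => by rw [h]; exact hnm
  have hPQ : ¬(x.val % t = 1 ∧ x.val % t = 2 % t) := fun ⟨u, v⟩ => h2t (by omega)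
  have hxne : x.val ≠ t * (k - 1) + 2 := by omega
  constructor
  · intro h
    have hA0 : ¬(x.val % t = 1 ∧ x.val ≠ t * (k - 1) + 1) := by
      intro ⟨u, v⟩
      exact h (Or.inr (Or.inl ⟨by omega, u, by omega, v⟩))
    have hA1 : ¬(x.val % t = 2 % t ∧ x.val ≠ 2) := by
      intro ⟨u, v⟩
      exact h (Or.inr (Or.inr ⟨u, v, hxne⟩))
    by_cases hP : x.val % t = 1
    · right; right
      by_contra hcon
      exact hA0 ⟨hP, hcon⟩
    · by_cases hQ : x.val % t = 2 % t
      · right; left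
        by_contra hcon
        exact hA1 ⟨hQ, hcon⟩
      · exact Or.inl ⟨hP, hQ, by omega⟩
  · intro h hcon
    rcases hcon with (h' | h') | ⟨u1, u2, u3, u4⟩ | ⟨u1, u2, u3⟩
    · exact hv0 (hx0.mp h')
    · exact hv1 (hx1.mp h')
    · rcases h with ⟨v1, v2, v3⟩ | v | v
      · exact v1 u2
      · exact hPQ ⟨u2, hE2 v⟩
      · exact u4 v
    · rcases h with ⟨v1, v2, v3⟩ | v | v
      · exact v2 u1
      · exact u2 v
      · exact hPQ ⟨hEn v, u1⟩

lemma mem2 (t k : ℕ) (ht : 2 ≤ t) (hk : 3 ≤ k) (x : ZMod ((t - 1) * (k - 1) + 2)) :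
    x ∈ (({0} : Set (ZMod ((t - 1) * (k - 1) + 2))) ∪ (GA' (t - 1) k).neighborSet 0)ᶜ ↔
      T2p t (k - 1) x.val := by
  haveI : NeZero ((t - 1) * (k - 1) + 2) := ⟨by omega⟩
  have h22 : 2 ≤ (t - 1) * (k - 1) := by
    calc 2 = 1 * 2 := by omega
    _ ≤ (t - 1) * (k - 1) := Nat.mul_le_mul (by omega) (by omega)
  have h0 : (0 : ZMod ((t - 1) * (k - 1) + 2)).val = 0 := ZMod.val_zero
  have hx0 : x = 0 ↔ x.val = 0 := by
    constructor
    · intro h; rw [h, h0]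
    · intro h; exact ZMod.val_injective _ (by rw [h, h0])
  have hmem : x ∈ (({0} : Set (ZMod ((t - 1) * (k - 1) + 2))) ∪
      (GA' (t - 1) k).neighborSet 0)ᶜ ↔ ¬(x = 0 ∨ (GA' (t - 1) k).Adj 0 x) := by
    simp only [Set.mem_compl_iff, Set.mem_union, Set.mem_singleton_iff,
      SimpleGraph.mem_neighborSet]
  have hAdj : (GA' (t - 1) k).Adj 0 x ↔ (x.val ≠ 0 ∧ x.val % (t - 1) = 1 % (t - 1) ∧
      x.val ≠ 1 ∧ x.val ≠ (t - 1) * (k - 1) + 1) := by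
    rw [adj_GA (t - 1) k (by omega) hk, sub_zero]
    constructor
    · rintro ⟨u, v⟩
      exact ⟨fun w => u (hx0.mpr w).symm, v⟩
    · rintro ⟨u, v⟩
      exact ⟨fun w => u (hx0.mp w.symm), v⟩
  have hEn : x.val = (t - 1) * (k - 1) + 1 → x.val % (t - 1) = 1 % (t - 1) := fun h => by
    rw [h, Nat.mul_add_mod]
  rw [hmem, hAdj, T2p]
  by_cases hv0 : x.val = 0
  · constructor
    · intro h; exact absurd (Or.inl (hx0.mpr hv0)) h
    · intro h
      exfalso
      rcases h with ⟨u, v⟩ | u | u <;> omega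
  · constructor
    · intro h
      by_cases hP : x.val % (t - 1) = 1 % (t - 1)
      · by_cases h1 : x.val = 1
        · exact Or.inr (Or.inl h1)
        · right; right
          by_contra hcon
          exact h (Or.inr ⟨hv0, hP, h1, hcon⟩)
      · exact Or.inl ⟨hP, hv0⟩
    · intro h hcon
      rcases hcon with h' | ⟨hne, hm, h1, h2⟩
      · exact hv0 (hx0.mp h')
      · rcases h with ⟨v1, v2⟩ | v | v
        · exact v1 hm
        · exact h1 v
        · exact h2 v

/-- For `t ≥ 2`, the explicit map `φ` (sending `x = tq + r` to `(t-1)q + r` if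
`r ∈ {0,1}` and to `(t-1)q + (r-1)` otherwise) is a graph isomorphism from
`GA(t,k)' \ (N[0] ∪ N[1])` onto `GA(t-1,k)' \ N[0]`, with `φ(2) = 1` and
`φ(t(k-1)+1) = (t-1)(k-1)+1`. -/
theorem stmt_14 (t k : ℕ) (ht : 2 ≤ t) (hk : 3 ≤ k) :
    let f : ZMod (t * (k - 1) + 2) → ZMod ((t - 1) * (k - 1) + 2) := fun x =>
      (((t - 1) * (x.val / t) +
        (if x.val % t ≤ 1 then x.val % t else x.val % t - 1) : ℕ) :
          ZMod ((t - 1) * (k - 1) + 2))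
    let S1 : Set (ZMod (t * (k - 1) + 2)) :=
      ({0, 1} ∪ (GA' t k).neighborSet 0 ∪ (GA' t k).neighborSet 1)ᶜ
    let S2 : Set (ZMod ((t - 1) * (k - 1) + 2)) :=
      ({0} ∪ (GA' (t - 1) k).neighborSet 0)ᶜ
    Set.BijOn f S1 S2 ∧
    (∀ x ∈ S1, ∀ y ∈ S1, ((GA' t k).Adj x y ↔ (GA' (t - 1) k).Adj (f x) (f y))) ∧
    f 2 = 1 ∧
    f ((t * (k - 1) + 1 : ℕ) : ZMod (t * (k - 1) + 2)) =
      (((t - 1) * (k - 1) + 1 : ℕ) : ZMod ((t - 1) * (k - 1) + 2)) := by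
  intro f S1 S2
  have hK : 2 ≤ k - 1 := by omega
  haveI hNZ1 : NeZero (t * (k - 1) + 2) := ⟨by omega⟩
  haveI hNZ2 : NeZero ((t - 1) * (k - 1) + 2) := ⟨by omega⟩
  have hub : ∀ x : ZMod (t * (k - 1) + 2), x.val < t * (k - 1) + 2 := fun x => ZMod.val_lt x
  have hfval : ∀ x : ZMod (t * (k - 1) + 2), (f x).val = Fn t x.val := by
    intro x
    show ((((t - 1) * (x.val / t) +
      (if x.val % t ≤ 1 then x.val % t else x.val % t - 1) : ℕ)) :
        ZMod ((t - 1) * (k - 1) + 2)).val = _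
    rw [ZMod.val_cast_of_lt]
    · rfl
    · exact Fn_lt t (k - 1) x.val ht (hub x)
  have hmem1 : ∀ x, x ∈ S1 ↔ T1p t (k - 1) x.val := fun x => mem1 t k ht hk x
  have hmem2 : ∀ y, y ∈ S2 ↔ T2p t (k - 1) y.val := fun y => mem2 t k ht hk y
  refine ⟨⟨?_, ?_, ?_⟩, ?_, ?_, ?_⟩
  · -- MapsTo
    intro x hx
    exact (hmem2 (f x)).mpr (by
      rw [hfval]
      exact FT t (k - 1) x.val ht hK ((hmem1 x).mp hx) (hub x))
  · -- InjOn
    intro x hx y hy hxy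
    have hv : Fn t x.val = Fn t y.val := by
      rw [← hfval, ← hfval, hxy]
    apply ZMod.val_injective
    rw [← GF t (k - 1) x.val ht hK ((hmem1 x).mp hx) (hub x),
      ← GF t (k - 1) y.val ht hK ((hmem1 y).mp hy) (hub y), hv]
  · -- SurjOn
    intro y hy
    obtain ⟨hT1, hlt, hFG⟩ := GT t (k - 1) y.val ht hK ((hmem2 y).mp hy) (ZMod.val_lt y)
    refine ⟨((Gn t (k - 1) y.val : ℕ) : ZMod (t * (k - 1) + 2)), ?_, ?_⟩
    · rw [hmem1, ZMod.val_cast_of_lt hlt]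
      exact hT1
    · apply ZMod.val_injective
      rw [hfval, ZMod.val_cast_of_lt hlt, hFG]
  · -- Adjacency
    intro x hx y hy
    have main : ∀ x y : ZMod (t * (k - 1) + 2), x ∈ S1 → y ∈ S1 → x.val < y.val →
        ((GA' t k).Adj x y ↔ (GA' (t - 1) k).Adj (f x) (f y)) := by
      intro x y hx hy hlt
      have ha := (hmem1 x).mp hx
      have hb := (hmem1 y).mp hy
      have hd : (y - x).val = y.val - x.val := ZMod.val_sub (le_of_lt hlt)
      have hFlt : Fn t x.val < Fn t y.val := Fn_strict t (k - 1) x.val y.val ht ha hlt (hub y)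
      have hd2 : (f y - f x).val = Fn t y.val - Fn t x.val := by
        rw [ZMod.val_sub (by rw [hfval, hfval]; omega), hfval, hfval]
      rw [adj_GA t k (by omega) hk, adj_GA (t - 1) k (by omega) hk, hd, hd2]
      have hxy : x ≠ y := by
        intro h; rw [h] at hlt; exact lt_irrefl _ hlt
      have hfxy : f x ≠ f y := by
        intro h
        have : (f x).val = (f y).val := by rw [h]
        rw [hfval, hfval] at this
        omega
      have hcore := core t (k - 1) x.val y.val ht hK ha hb (hub x) (hub y) hlt
      constructor
      · rintro ⟨-, h⟩; exact ⟨hfxy, hcore.mp h⟩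
      · rintro ⟨-, h⟩; exact ⟨hxy, hcore.mpr h⟩
    rcases lt_trichotomy x.val y.val with h | h | h
    · exact main x y hx hy h
    · have hxy : x = y := ZMod.val_injective _ h
      subst hxy
      constructor
      · intro h'; exact absurd h' ((GA' t k).irrefl)
      · intro h'; exact absurd h' ((GA' (t - 1) k).irrefl)
    · rw [SimpleGraph.adj_comm, SimpleGraph.adj_comm (GA' (t - 1) k)]
      exact main y x hy hx h
  · -- f 2 = 1
    have hv2 : (2 : ZMod (t * (k - 1) + 2)).val = 2 := by
      have h4 : 4 ≤ t * (k - 1) := by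
        calc 4 = 2 * 2 := by omega
        _ ≤ t * (k - 1) := Nat.mul_le_mul ht hK
      rw [show (2 : ZMod (t * (k - 1) + 2)) = ((2 : ℕ) : ZMod (t * (k - 1) + 2)) by norm_num,
        ZMod.val_cast_of_lt (by omega)]
    have hfv : f 2 = ((Fn t (2 : ZMod (t * (k - 1) + 2)).val : ℕ) :
        ZMod ((t - 1) * (k - 1) + 2)) := rfl
    rw [hfv, hv2, Fn_two t ht, Nat.cast_one]
  · -- f (n-1) = m-1
    have hv : ((t * (k - 1) + 1 : ℕ) : ZMod (t * (k - 1) + 2)).val = t * (k - 1) + 1 :=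
      ZMod.val_cast_of_lt (by omega)
    have hfv : f ((t * (k - 1) + 1 : ℕ) : ZMod (t * (k - 1) + 2)) =
        ((Fn t ((t * (k - 1) + 1 : ℕ) : ZMod (t * (k - 1) + 2)).val : ℕ) :
          ZMod ((t - 1) * (k - 1) + 2)) := rfl
    rw [hfv, hv, Fn_last t (k - 1) ht]
end

section
/- For k' > t(k-1) + k + 1, the map x ↦ (t+1)x for 0 ≤ x ≤ t(k-1)+1 gives an isomorphism from GA(t,k) onto an induced subgraph of GA(t,k')'. -/
private lemma mod_iff_cast (t a : ℕ) : a % t = 1 % t ↔ (a : ZMod t) = ((1 : ℕ) : ZMod t) := by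
  rw [ZMod.natCast_eq_natCast_iff]
  exact Iff.rfl

private lemma sub_val_of_lt {M : ℕ} [NeZero M] {a b : ZMod M} (h : a.val < b.val) :
    (a - b).val = M - (b.val - a.val) := by
  have hb : b.val < M := ZMod.val_lt b
  have hab : a - b = ((M + a.val - b.val : ℕ) : ZMod M) := by
    rw [Nat.cast_sub (by omega : b.val ≤ M + a.val)]
    push_cast
    simp [ZMod.natCast_val, ZMod.cast_id, ZMod.natCast_self]
  rw [hab, ZMod.val_natCast_of_lt (by omega : M + a.val - b.val < M)]
  omega



/-- The Generalized Andrásfai graph `GA(t,k)` on `ℤ/(t(k-1)+2)ℤ`: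
vertices `i < j` are adjacent iff `j - i ≡ 1 (mod t)`. -/
def GA (t k : ℕ) : SimpleGraph (ZMod (t * (k - 1) + 2)) :=
  SimpleGraph.fromRel fun x y => (y - x).val % t = 1 % t


/-- For `k' > t(k-1)+k+1`, the map `x ↦ (t+1)·x` (on representatives
`0 ≤ x ≤ t(k-1)+1`) embeds `GA(t,k)` as an induced subgraph of `GA(t,k')'`:
it is injective, and two vertices are adjacent in `GA(t,k)` iff their images
are adjacent in `GA(t,k')'`. -/
theorem stmt_19 (t k k' : ℕ) (ht : 1 ≤ t) (hk : 2 ≤ k)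
    (hk' : t * (k - 1) + k + 1 < k') :
    let f : ZMod (t * (k - 1) + 2) → ZMod (t * (k' - 1) + 2) := fun x =>
      (((t + 1) * x.val : ℕ) : ZMod (t * (k' - 1) + 2))
    Function.Injective f ∧
    ∀ x y : ZMod (t * (k - 1) + 2), (GA t k).Adj x y ↔ (GA' t k').Adj (f x) (f y) := by
  intro f
  haveI : NeZero (t * (k - 1) + 2) := ⟨by omega⟩
  haveI : NeZero (t * (k' - 1) + 2) := ⟨by omega⟩
  have hbig : (t + 1) * (t * (k - 1) + 1) + 2 ≤ t * (k' - 1) + 2 := by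
    have h2 : t * (t * (k - 1) + (k - 1) + 2) ≤ t * (k' - 1) :=
      Nat.mul_le_mul_left _ (by omega)
    nlinarith [h2, ht]
  have hfval : ∀ x : ZMod (t * (k - 1) + 2), (f x).val = (t + 1) * x.val := by
    intro x
    have hx : x.val < t * (k - 1) + 2 := ZMod.val_lt x
    have h1 : (t + 1) * x.val ≤ (t + 1) * (t * (k - 1) + 1) :=
      Nat.mul_le_mul_left _ (by omega)
    apply ZMod.val_natCast_of_lt
    omega
  have finj : Function.Injective f := by
    intro x y h
    have h2 : (t + 1) * x.val = (t + 1) * y.val := by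
      rw [← hfval, ← hfval, h]
    exact ZMod.val_injective _ (Nat.eq_of_mul_eq_mul_left (by omega) h2)
  have key : ∀ x y : ZMod (t * (k - 1) + 2), x ≠ y →
      (((f x - f y).val % t = 1 % t ∧ (f x - f y).val ≠ 1 ∧
        (f x - f y).val ≠ t * (k' - 1) + 1) ↔ (x - y).val % t = 1 % t) := by
    intro x y hxy
    have hxl : x.val < t * (k - 1) + 2 := ZMod.val_lt x
    have hyl : y.val < t * (k - 1) + 2 := ZMod.val_lt y
    have hvne : x.val ≠ y.val := fun h => hxy (ZMod.val_injective _ h)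
    rcases le_or_gt y.val x.val with hle | hlt
    · -- y.val < x.val; d = x.val - y.val
      have hlt' : y.val < x.val := lt_of_le_of_ne hle (Ne.symm hvne)
      have hd : (x - y).val = x.val - y.val := ZMod.val_sub hle
      have he : (f x - f y).val = (t + 1) * (x.val - y.val) := by
        rw [ZMod.val_sub (by rw [hfval, hfval]; exact Nat.mul_le_mul_left _ hle),
          hfval, hfval]
        exact (Nat.mul_sub _ _ _).symm
      have hmod : ((t + 1) * (x.val - y.val)) % t = (x.val - y.val) % t := by
        rw [show (t + 1) * (x.val - y.val) = (x.val - y.val) + (x.val - y.val) * t by ring,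
          Nat.add_mul_mod_self_right]
      have hub : (t + 1) * (x.val - y.val) ≤ (t + 1) * (t * (k - 1) + 1) :=
        Nat.mul_le_mul_left _ (by omega)
      have hlb : t + 1 ≤ (t + 1) * (x.val - y.val) :=
        Nat.le_mul_of_pos_right _ (by omega)
      have hne1 : (t + 1) * (x.val - y.val) ≠ 1 := by omega
      have hne2 : (t + 1) * (x.val - y.val) ≠ t * (k' - 1) + 1 := by omega
      rw [he, hd, hmod]
      simp [hne1, hne2]
    · -- x.val < y.val; d = y.val - x.val
      have hd : (x - y).val = (t * (k - 1) + 2) - (y.val - x.val) := sub_val_of_lt hlt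
      have he : (f x - f y).val = (t * (k' - 1) + 2) - (t + 1) * (y.val - x.val) := by
        rw [sub_val_of_lt (by
            rw [hfval, hfval]
            exact mul_lt_mul_of_pos_left hlt (by omega : 0 < t + 1)),
          hfval, hfval]
        congr 1
        exact (Nat.mul_sub _ _ _).symm
      have hub : (t + 1) * (y.val - x.val) ≤ (t + 1) * (t * (k - 1) + 1) :=
        Nat.mul_le_mul_left _ (by omega)
      have hlb : t + 1 ≤ (t + 1) * (y.val - x.val) :=
        Nat.le_mul_of_pos_right _ (by omega)
      have hc : (((t * (k' - 1) + 2) - (t + 1) * (y.val - x.val) : ℕ) : ZMod t)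
          = (((t * (k - 1) + 2) - (y.val - x.val) : ℕ) : ZMod t) := by
        rw [Nat.cast_sub (by omega), Nat.cast_sub (by omega)]
        push_cast
        simp [ZMod.natCast_self]
      have hne1 : (t * (k' - 1) + 2) - (t + 1) * (y.val - x.val) ≠ 1 := by omega
      have hne2 : (t * (k' - 1) + 2) - (t + 1) * (y.val - x.val) ≠ t * (k' - 1) + 1 := by
        omega
      rw [he, hd, mod_iff_cast, mod_iff_cast, hc]
      simp [hne1, hne2]
  refine ⟨finj, fun x y => ?_⟩
  simp only [GA, GA', SimpleGraph.fromRel_adj]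
  constructor
  · rintro ⟨hne, h⟩
    refine ⟨fun hc => hne (finj hc), ?_⟩
    rcases h with h | h
    · exact Or.inl ((key y x (Ne.symm hne)).2 h)
    · exact Or.inr ((key x y hne).2 h)
  · rintro ⟨hne, h⟩
    have hxy : x ≠ y := fun hc => hne (congrArg f hc)
    refine ⟨hxy, ?_⟩
    rcases h with h | h
    · exact Or.inl ((key y x (Ne.symm hxy)).1 h)
    · exact Or.inr ((key x y hxy).1 h)
end
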